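/- arXiv:1210.5034 — 5 statements merged into one kernel-verified Lean document; each statement's English description precedes it below -/
import Mathlib

section
/- Fix reals L, A, ρ, C_in, C_out > 0, a real α > 0 and a real R > 0, and assume ρ < 6·√(2·L·A)·R. For an integer k ≥ 1 and a vector l = (l_1,…,l_k) with every l_i ∈ [1,∞), call the pair (k,l) feasible if (L/(2k))·(R + 3·Σ_{i=1}^k √(2A/(L·l_i^α)))² ≤ ρ. Let k* ≥ 1 be an integer attaining the minimum of φ(k) = k·C_in·(C(k)/k)^(−2/α) + k·C_out over all integers k ≥ 1 with C(k) > 0, and set l*_i = (C(k*)/k*)^(−2/α) for i = 1,…,k*. Then (k*, l*) is feasible and for every feasible pair (k, l) one has C_in·Σ_{i=1}^{k*} l*_i + k*·C_out ≤ C_in·Σ_{i=1}^{k} l_i + k·C_out. -/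
open Real Finset

/-!
With `m i = l i ^ (-α/2)` the error bound `B₁(k, l) ≤ ρ` is equivalent to the linear constraint
`∑ m i ≤ C k`, while the inner cost is `∑ l i = ∑ (m i) ^ (-2/α)`, a sum of convex functions of
the `m i`. The tangent-line inequality for `u ↦ u ^ (-2/α)` at the mean `C k / k` bounds it below
by `k * (C k / k) ^ (-2/α)`, with equality for the constant choice; hence every feasible `(k, l)`
costs at least `φ k ≥ φ kstar`, which is the cost of `(kstar, lstar)`. The threshold on `ρ` gives
`C k < k`, i.e. `lstar ≥ 1`.
-/

lemma one_add_sub_mul_le_rpow_neg {p u : ℝ} (hp : 0 ≤ p) (hu : 0 < u) :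
    1 + p - p * u ≤ u ^ (-p) := by
  calc 1 + p - p * u ≤ -p * log u + 1 := by
        nlinarith [log_le_sub_one_of_pos hu]
    _ ≤ exp (-p * log u) := add_one_le_exp _
    _ = u ^ (-p) := by rw [rpow_def_of_pos hu, mul_comm]

lemma card_mul_rpow_neg_le_sum_rpow_neg {ι : Type*} {s : Finset ι} {m : ι → ℝ} {p c : ℝ}
    (hs : s.Nonempty) (hp : 0 ≤ p) (hc : 0 < c) (hm : ∀ i ∈ s, 0 < m i)
    (hsum : ∑ i ∈ s, m i ≤ c) :
    #s * (c / #s) ^ (-p) ≤ ∑ i ∈ s, m i ^ (-p) := by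
  set t := c / #s
  have hcard : (0 : ℝ) < #s := by exact_mod_cast hs.card_pos
  have ht : 0 < t := div_pos hc hcard
  have htp : 0 < t ^ (-p) := rpow_pos_of_pos ht _
  have tangent : ∀ i ∈ s, 1 + p - p * (m i / t) ≤ m i ^ (-p) / t ^ (-p) := fun i hi => by
    rw [← div_rpow (hm i hi).le ht.le]
    exact one_add_sub_mul_le_rpow_neg hp (div_pos (hm i hi) ht)
  have hct : c / t = #s := div_div_cancel₀ hc.ne'
  calc #s * t ^ (-p) = (#s * (1 + p) - p * (c / t)) * t ^ (-p) := by rw [hct]; ring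
    _ ≤ (∑ i ∈ s, (1 + p - p * (m i / t))) * t ^ (-p) := by
        gcongr
        rw [sum_sub_distrib, sum_const, nsmul_eq_mul, ← mul_sum, ← sum_div]
        gcongr
    _ ≤ (∑ i ∈ s, m i ^ (-p) / t ^ (-p)) * t ^ (-p) := by gcongr with i hi; exact tangent i hi
    _ = ∑ i ∈ s, m i ^ (-p) := by rw [← sum_div, div_mul_cancel₀ _ htp.ne']

lemma sqrt_div_mul_rpow {a L α x : ℝ} (hL : 0 ≤ L) (hx : 0 < x) :
    √(a / (L * x ^ α)) = √a / √L * x ^ (-(α / 2)) := by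
  rw [sqrt_div' _ (by positivity), sqrt_mul hL, sqrt_eq_rpow (x ^ α), ← rpow_mul hx.le,
    rpow_neg hx.le]
  field_simp

lemma div_mul_sq_le_iff_le_sqrt {L k ρ T : ℝ} (hL : 0 < L) (hk : 0 < k) (hρ : 0 ≤ ρ)
    (hT : 0 ≤ T) : L / (2 * k) * T ^ 2 ≤ ρ ↔ T ≤ √(2 * k * ρ / L) := by
  rw [le_sqrt hT (by positivity), le_div_iff₀ hL, div_mul_eq_mul_div, div_le_iff₀ (by positivity),
    mul_comm (T ^ 2), mul_comm ρ]

/-- The paper's `C(k)`. -/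
noncomputable def errorBudget (L A ρ R k : ℝ) : ℝ := √L / (3 * √(2 * A)) * (√(2 * k * ρ / L) - R)

lemma errorBudget_lt_self {L A ρ R k : ℝ} (hL : 0 < L) (hA : 0 < A) (hR : 0 ≤ R) (hk : 0 < k)
    (hρ : ρ < 6 * √(2 * L * A) * R) : errorBudget L A ρ R k < k := by
  have hsLA : √(2 * L * A) = √L * √(2 * A) := by rw [← sqrt_mul hL.le]; ring_nf
  have hsk : √L * √(2 * k * ρ / L) = √(2 * k * ρ) := by
    rw [← sqrt_mul hL.le, mul_div_cancel₀ _ hL.ne']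
  have hlt : √(2 * k * ρ) < √L * R + 3 * √(2 * A) * k := by
    rw [sqrt_lt' (by positivity)]
    rw [hsLA] at hρ
    -- `(a + b) ^ 2 ≥ 4 * a * b`, and here `4 * a * b = 12 * √(2 * L * A) * R * k > 2 * k * ρ`
    nlinarith [mul_lt_mul_of_pos_left hρ hk, sq_nonneg (√L * R - 3 * √(2 * A) * k)]
  rw [errorBudget, div_mul_eq_mul_div, div_lt_iff₀ (by positivity), mul_sub, hsk]
  linarith

lemma errorBound_le_iff {L A R ρ k M : ℝ} (hL : 0 < L) (hA : 0 < A) (hR : 0 ≤ R) (hρ : 0 ≤ ρ)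
    (hk : 0 < k) (hM : 0 ≤ M) :
    L / (2 * k) * (R + 3 * (√(2 * A) / √L * M)) ^ 2 ≤ ρ ↔
      M ≤ errorBudget L A ρ R k := by
  have hcancel : √L / (3 * √(2 * A)) * (3 * (√(2 * A) / √L * M)) = M := by field_simp
  rw [errorBudget, div_mul_sq_le_iff_le_sqrt hL hk hρ (by positivity), ← le_sub_iff_add_le',
    ← mul_le_mul_iff_of_pos_left (by positivity : 0 < √L / (3 * √(2 * A))), hcancel]

lemma errorBound_le_iff_sum_rpow_le {ι : Type*} {s : Finset ι} {l : ι → ℝ} {L A R ρ α k : ℝ}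
    (hL : 0 < L) (hA : 0 < A) (hR : 0 ≤ R) (hρ : 0 ≤ ρ) (hk : 0 < k) (hl : ∀ i ∈ s, 0 < l i) :
    L / (2 * k) * (R + 3 * ∑ i ∈ s, √(2 * A / (L * l i ^ α))) ^ 2 ≤ ρ ↔
      ∑ i ∈ s, l i ^ (-(α / 2)) ≤ errorBudget L A ρ R k := by
  rw [sum_congr rfl fun i hi => sqrt_div_mul_rpow hL.le (hl i hi), ← mul_sum]
  exact errorBound_le_iff hL hA hR hρ hk (sum_nonneg fun i hi => (rpow_pos_of_pos (hl i hi) _).le)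

lemma card_mul_rpow_le_sum_of_sum_rpow_le {ι : Type*} {s : Finset ι} {l : ι → ℝ} {α c : ℝ}
    (hs : s.Nonempty) (hα : 0 < α) (hl : ∀ i ∈ s, 0 < l i)
    (hsum : ∑ i ∈ s, l i ^ (-(α / 2)) ≤ c) :
    0 < c ∧ #s * (c / #s) ^ (-(2 / α)) ≤ ∑ i ∈ s, l i := by
  have hc : 0 < c := (sum_pos (fun i hi => rpow_pos_of_pos (hl i hi) _) hs).trans_le hsum
  refine ⟨hc, ?_⟩
  convert card_mul_rpow_neg_le_sum_rpow_neg (p := 2 / α) hs (by positivity) hc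
    (fun i hi => rpow_pos_of_pos (hl i hi) _) hsum using 2 with i hi
  rw [← rpow_mul (hl i hi).le, show -(α / 2) * -(2 / α) = 1 by field_simp, rpow_one]

theorem stmt_0_general (L A ρ Cin Cout α R : ℝ)
    (hL : 0 < L) (hA : 0 < A) (hρ : 0 < ρ) (hCin : 0 < Cin)
    (hα : 0 < α) (hR : 0 < R)
    (hthresh : ρ < 6 * Real.sqrt (2 * L * A) * R)
    (C : ℕ → ℝ)
    (hC : ∀ k : ℕ, C k = Real.sqrt L / (3 * Real.sqrt (2 * A)) *
      (Real.sqrt (2 * k * ρ / L) - R))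
    (feasible : ℕ → (ℕ → ℝ) → Prop)
    (hfeas : ∀ (k : ℕ) (l : ℕ → ℝ), feasible k l ↔
      1 ≤ k ∧ (∀ i ∈ Finset.Icc 1 k, (1 : ℝ) ≤ l i) ∧
        L / (2 * k) *
          (R + 3 * ∑ i ∈ Finset.Icc 1 k, Real.sqrt (2 * A / (L * l i ^ α))) ^ 2 ≤ ρ)
    (φ : ℕ → ℝ)
    (hφ : ∀ k : ℕ, φ k = k * Cin * (C k / k) ^ (-(2 / α)) + k * Cout)
    (kstar : ℕ) (hk1 : 1 ≤ kstar) (hCpos : 0 < C kstar)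
    (hmin : ∀ k : ℕ, 1 ≤ k → 0 < C k → φ kstar ≤ φ k)
    (lstar : ℝ) (hlstar : lstar = (C kstar / kstar) ^ (-(2 / α))) :
    feasible kstar (fun _ => lstar) ∧
      ∀ (k : ℕ) (l : ℕ → ℝ), feasible k l →
        Cin * (∑ _i ∈ Finset.Icc 1 kstar, lstar) + kstar * Cout ≤
          Cin * (∑ i ∈ Finset.Icc 1 k, l i) + k * Cout := by
  have hfeas' : ∀ (k : ℕ) (l : ℕ → ℝ), feasible k l ↔
      1 ≤ k ∧ (∀ i ∈ Icc 1 k, (1 : ℝ) ≤ l i) ∧ ∑ i ∈ Icc 1 k, l i ^ (-(α / 2)) ≤ C k := by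
    intro k l
    rw [hfeas, hC]
    refine and_congr_right fun hk => and_congr_right fun hl => ?_
    exact errorBound_le_iff_sum_rpow_le hL hA hR.le hρ.le (by exact_mod_cast hk)
      fun i hi => one_pos.trans_le (hl i hi)
  have hkstar : (0 : ℝ) < kstar := by exact_mod_cast hk1
  have hq : 0 < C kstar / kstar := div_pos hCpos hkstar
  have hlstar_rpow : lstar ^ (-(α / 2)) = C kstar / kstar := by
    rw [hlstar, ← rpow_mul hq.le, show -(2 / α) * -(α / 2) = 1 by field_simp, rpow_one]
  have hlstar_one : 1 ≤ lstar := by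
    have hq1 : C kstar / kstar < 1 := by
      rw [div_lt_one hkstar, hC]
      exact errorBudget_lt_self hL hA hR.le hkstar hthresh
    rw [hlstar]
    exact one_le_rpow_of_pos_of_le_one_of_nonpos hq hq1.le (neg_nonpos.2 (by positivity))
  refine ⟨(hfeas' _ _).2 ⟨hk1, fun _ _ => hlstar_one, ?_⟩, fun k l hkl => ?_⟩
  · simp [hlstar_rpow, mul_div_cancel₀ _ hkstar.ne']
  obtain ⟨hk, hl, hsum⟩ := (hfeas' k l).1 hkl
  obtain ⟨hCk, hlower⟩ := card_mul_rpow_le_sum_of_sum_rpow_le (nonempty_Icc.2 hk) hα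
    (fun i hi => one_pos.trans_le (hl i hi)) hsum
  have hopt := hmin k hk hCk
  simp only [Nat.card_Icc, Nat.add_sub_cancel] at hlower
  rw [hφ, hφ] at hopt
  simp only [sum_const, Nat.card_Icc, Nat.add_sub_cancel, nsmul_eq_mul, hlstar]
  linarith [mul_le_mul_of_nonneg_left hlower hCin.le]

/-- Proposition 2 (basic outer scheme, sublinear inner rate): the computationally optimal
strategy uses a constant number of inner iterations `lstar = (C k*/k*)^(-2/α)`. -/
theorem stmt_0 (L A ρ Cin Cout α R : ℝ)
    (hL : 0 < L) (hA : 0 < A) (hρ : 0 < ρ) (hCin : 0 < Cin) (hCout : 0 < Cout)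
    (hα : 0 < α) (hR : 0 < R)
    (hthresh : ρ < 6 * Real.sqrt (2 * L * A) * R)
    (C : ℕ → ℝ)
    (hC : ∀ k : ℕ, C k = Real.sqrt L / (3 * Real.sqrt (2 * A)) *
      (Real.sqrt (2 * k * ρ / L) - R))
    (feasible : ℕ → (ℕ → ℝ) → Prop)
    (hfeas : ∀ (k : ℕ) (l : ℕ → ℝ), feasible k l ↔
      1 ≤ k ∧ (∀ i ∈ Finset.Icc 1 k, (1 : ℝ) ≤ l i) ∧
        L / (2 * k) *
          (R + 3 * ∑ i ∈ Finset.Icc 1 k, Real.sqrt (2 * A / (L * l i ^ α))) ^ 2 ≤ ρ)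
    (φ : ℕ → ℝ)
    (hφ : ∀ k : ℕ, φ k = k * Cin * (C k / k) ^ (-(2 / α)) + k * Cout)
    (kstar : ℕ) (hk1 : 1 ≤ kstar) (hCpos : 0 < C kstar)
    (hmin : ∀ k : ℕ, 1 ≤ k → 0 < C k → φ kstar ≤ φ k)
    (lstar : ℝ) (hlstar : lstar = (C kstar / kstar) ^ (-(2 / α))) :
    feasible kstar (fun _ => lstar) ∧
      ∀ (k : ℕ) (l : ℕ → ℝ), feasible k l →
        Cin * (∑ _i ∈ Finset.Icc 1 kstar, lstar) + kstar * Cout ≤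
          Cin * (∑ i ∈ Finset.Icc 1 k, l i) + k * Cout :=
  stmt_0_general L A ρ Cin Cout α R hL hA hρ hCin hα hR hthresh C hC feasible hfeas φ hφ kstar hk1
    hCpos hmin lstar hlstar
end

section
/- Fix reals L, A, ρ, C_in, C_out > 0, a real γ ∈ (0,1) and a real R > 0, and assume ρ < 6·√(2·L·A·(1−γ))·R. For an integer k ≥ 1 and a vector l = (l_1,…,l_k) with every l_i ∈ [1,∞), call the pair (k,l) feasible if (L/(2k))·(R + 3·Σ_{i=1}^k √(2A·(1−γ)^{l_i}/L))² ≤ ρ. Let k* ≥ 1 be an integer attaining the minimum of φ(k) = (2k·C_in/ln(1−γ))·ln(C(k)/k) + k·C_out over all integers k ≥ 1 with C(k) > 0, and set l*_i = 2·ln(C(k*)/k*)/ln(1−γ) for i = 1,…,k*. Then (k*, l*) is feasible and for every feasible pair (k, l) one has C_in·Σ_{i=1}^{k*} l*_i + k*·C_out ≤ C_in·Σ_{i=1}^{k} l_i + k·C_out. -/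
open Real Finset

/-!
Write `b = 1 - γ`. Solving the quadratic error bound for the sum shows that `(k, l)` is
feasible exactly when `∑ b ^ (l i / 2) ≤ C k`. By AM–GM this sum is at least
`k * b ^ (∑ l i / (2 k))`, so a feasible pair has `∑ l i ≥ 2 k logb b (C k / k)`, i.e. its cost
is at least `φ k ≥ φ k*`. The constant choice `l*` makes every term equal to `C k* / k*`, so it
meets the bound with equality and costs exactly `φ k*`; the threshold on `ρ` gives
`C k* / k* < √b`, which is `l* ≥ 1`.
-/

lemma sqrt_mul_rpow_div {a b c : ℝ} (hb : 0 ≤ b) (x : ℝ) :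
    √(a * b ^ x / c) = √(a / c) * b ^ (x / 2) := by
  rw [mul_div_right_comm, sqrt_mul' _ (rpow_nonneg hb x), sqrt_eq_rpow (b ^ x), ← rpow_mul hb,
    mul_one_div]

lemma rpow_sum_div_card_le {ι : Type*} {b : ℝ} (hb : 0 < b) {s : Finset ι} (hs : s.Nonempty)
    (x : ι → ℝ) : b ^ ((∑ i ∈ s, x i) / #s) ≤ (∑ i ∈ s, b ^ x i) / #s := by
  have h := geom_mean_le_arith_mean s (fun _ => 1) (fun i => b ^ x i) (fun _ _ => zero_le_one)
    (by simpa using hs) (fun i _ => (rpow_pos_of_pos hb _).le)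
  simp only [sum_const, nsmul_eq_mul, mul_one, one_mul, rpow_one] at h
  rwa [← rpow_sum_of_pos hb, ← rpow_mul hb.le, ← div_eq_mul_inv] at h

lemma two_mul_card_mul_logb_le_sum {ι : Type*} {b C : ℝ} (hb0 : 0 < b) (hb1 : b < 1)
    {s : Finset ι} (hs : s.Nonempty) (l : ι → ℝ) (hC : ∑ i ∈ s, b ^ (l i / 2) ≤ C) :
    2 * #s * logb b (C / #s) ≤ ∑ i ∈ s, l i := by
  have hn : (0 : ℝ) < #s := by exact_mod_cast hs.card_pos
  have hCpos : 0 < C := (sum_pos (fun i _ => rpow_pos_of_pos hb0 _) hs).trans_le hC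
  have hmean : b ^ ((∑ i ∈ s, l i / 2) / #s) ≤ C / #s :=
    (rpow_sum_div_card_le hb0 hs _).trans (div_le_div_of_nonneg_right hC hn.le)
  have hlog := (logb_le_iff_le_rpow_of_base_lt_one hb0 hb1 (div_pos hCpos hn)).2 hmean
  rw [← sum_div] at hlog
  calc 2 * #s * logb b (C / #s) ≤ 2 * #s * ((∑ i ∈ s, l i) / 2 / #s) := by gcongr
    _ = ∑ i ∈ s, l i := by field_simp

section

variable {L A ρ R : ℝ}

lemma error_bound_le_iff (hL : 0 < L) (hA : 0 < A) (hR : 0 < R) {k T : ℝ} (hk : 0 < k)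
    (hT : 0 ≤ T) :
    L / (2 * k) * (R + 3 * (√(2 * A / L) * T)) ^ 2 ≤ ρ ↔
      T ≤ √L / (3 * √(2 * A)) * (√(2 * k * ρ / L) - R) := by
  have hc : 0 < √(2 * A / L) := sqrt_pos.2 (by positivity)
  have hcoeff : √L / (3 * √(2 * A)) = (3 * √(2 * A / L))⁻¹ := by
    rw [sqrt_div (by positivity)]
    field_simp
  rw [hcoeff, le_inv_mul_iff₀ (by positivity), ← le_div_iff₀' (by positivity),
    show ρ / (L / (2 * k)) = 2 * k * ρ / L by field_simp,
    ← le_sqrt' (by positivity)]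
  constructor <;> intro h <;> linarith

lemma lt_mul_sqrt_of_threshold (hL : 0 < L) (hA : 0 < A) (hR : 0 < R) {b : ℝ}
    (hthresh : ρ < 6 * √(2 * L * A * b) * R) {k : ℝ} (hk : 0 < k) :
    √L / (3 * √(2 * A)) * (√(2 * k * ρ / L) - R) < k * √b := by
  rw [← not_le, ← error_bound_le_iff hL hA hR hk (by positivity), not_le]
  have hsqrt : √(2 * L * A * b) = L * √(2 * A / L) * √b := by
    rw [show 2 * L * A * b = L ^ 2 * (2 * A / L) * b by field_simp,
      sqrt_mul (by positivity), sqrt_mul (sq_nonneg _), sqrt_sq hL.le]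
  calc ρ < 6 * √(2 * L * A * b) * R := hthresh
    _ = L / (2 * k) * (4 * R * (3 * (√(2 * A / L) * (k * √b)))) := by
        rw [hsqrt]
        field_simp
        ring
    _ ≤ L / (2 * k) * (R + 3 * (√(2 * A / L) * (k * √b))) ^ 2 := by
        gcongr
        exact four_mul_le_sq_add _ _

lemma error_bound_sum_le_iff (hL : 0 < L) (hA : 0 < A) (hR : 0 < R) {b : ℝ} (hb : 0 < b)
    {ι : Type*} (s : Finset ι) (l : ι → ℝ) {k : ℝ} (hk : 0 < k) :
    L / (2 * k) * (R + 3 * ∑ i ∈ s, √(2 * A * b ^ l i / L)) ^ 2 ≤ ρ ↔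
      ∑ i ∈ s, b ^ (l i / 2) ≤ √L / (3 * √(2 * A)) * (√(2 * k * ρ / L) - R) := by
  simp_rw [sqrt_mul_rpow_div hb.le, ← mul_sum]
  exact error_bound_le_iff hL hA hR hk (sum_nonneg fun i _ => (rpow_pos_of_pos hb _).le)

end

theorem stmt_1_general (L A ρ Cin Cout γ R : ℝ)
    (hL : 0 < L) (hA : 0 < A) (hCin : 0 < Cin)
    (hγ0 : 0 < γ) (hγ1 : γ < 1) (hR : 0 < R)
    (hthresh : ρ < 6 * Real.sqrt (2 * L * A * (1 - γ)) * R)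
    (C : ℕ → ℝ)
    (hC : ∀ k : ℕ, C k = Real.sqrt L / (3 * Real.sqrt (2 * A)) *
      (Real.sqrt (2 * k * ρ / L) - R))
    (feasible : ℕ → (ℕ → ℝ) → Prop)
    (hfeas : ∀ (k : ℕ) (l : ℕ → ℝ), feasible k l ↔
      1 ≤ k ∧ (∀ i ∈ Finset.Icc 1 k, (1 : ℝ) ≤ l i) ∧
        L / (2 * k) *
          (R + 3 * ∑ i ∈ Finset.Icc 1 k,
            Real.sqrt (2 * A * (1 - γ) ^ (l i) / L)) ^ 2 ≤ ρ)
    (φ : ℕ → ℝ)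
    (hφ : ∀ k : ℕ, φ k = 2 * k * Cin / Real.log (1 - γ) * Real.log (C k / k) + k * Cout)
    (kstar : ℕ) (hk1 : 1 ≤ kstar) (hCpos : 0 < C kstar)
    (hmin : ∀ k : ℕ, 1 ≤ k → 0 < C k → φ kstar ≤ φ k)
    (lstar : ℝ) (hlstar : lstar = 2 * Real.log (C kstar / kstar) / Real.log (1 - γ)) :
    feasible kstar (fun _ => lstar) ∧
      ∀ (k : ℕ) (l : ℕ → ℝ), feasible k l →
        Cin * (∑ _i ∈ Finset.Icc 1 kstar, lstar) + kstar * Cout ≤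
          Cin * (∑ i ∈ Finset.Icc 1 k, l i) + k * Cout := by
  have hb0 : 0 < 1 - γ := by linarith
  have hb1 : 1 - γ < 1 := by linarith
  have hcard (k : ℕ) : #(Icc 1 k) = k := by simp
  have hfeas' (k : ℕ) (l : ℕ → ℝ) : feasible k l ↔ 1 ≤ k ∧ (∀ i ∈ Icc 1 k, (1 : ℝ) ≤ l i) ∧
      ∑ i ∈ Icc 1 k, (1 - γ) ^ (l i / 2) ≤ C k := by
    rw [hfeas, hC]
    refine and_congr_right fun hk => and_congr_right fun _ => ?_
    exact error_bound_sum_le_iff hL hA hR hb0 _ l (by exact_mod_cast hk)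
  have hφ' (k : ℕ) : φ k = Cin * (2 * k * logb (1 - γ) (C k / k)) + k * Cout := by
    rw [hφ, ← log_div_log]
    ring
  have hk0 : (0 : ℝ) < kstar := by exact_mod_cast hk1
  have hlstar' : lstar / 2 = logb (1 - γ) (C kstar / kstar) := by
    rw [hlstar, ← log_div_log]
    ring
  refine ⟨(hfeas' _ _).2 ⟨hk1, fun _ _ => ?_, ?_⟩, fun k l hkl => ?_⟩
  · have hC_lt : C kstar < kstar * √(1 - γ) :=
      hC kstar ▸ lt_mul_sqrt_of_threshold hL hA hR hthresh hk0
    have hhalf : 1 / 2 ≤ lstar / 2 := by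
      rw [hlstar', le_logb_iff_rpow_le_of_base_lt_one hb0 hb1 (div_pos hCpos hk0),
        ← sqrt_eq_rpow, div_le_iff₀ hk0, mul_comm]
      exact hC_lt.le
    linarith
  · rw [hlstar', rpow_logb hb0 hb1.ne (div_pos hCpos hk0), sum_const, hcard, nsmul_eq_mul,
      mul_div_cancel₀ _ hk0.ne']
  · obtain ⟨hk, -, hsum⟩ := (hfeas' k l).1 hkl
    have hs : (Icc 1 k).Nonempty := nonempty_Icc.2 hk
    have hCk : 0 < C k := (sum_pos (fun i _ => rpow_pos_of_pos hb0 _) hs).trans_le hsum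
    have hlog := two_mul_card_mul_logb_le_sum hb0 hb1 hs l hsum
    rw [hcard] at hlog
    calc Cin * (∑ _i ∈ Icc 1 kstar, lstar) + kstar * Cout = φ kstar := by
          rw [hφ', ← hlstar', sum_const, hcard, nsmul_eq_mul]
          ring
      _ ≤ φ k := hmin k hk hCk
      _ ≤ Cin * (∑ i ∈ Icc 1 k, l i) + k * Cout := by
          rw [hφ']
          gcongr

/-- Proposition 3 (basic outer scheme, linear inner rate): the computationally optimal
strategy uses a constant number of inner iterations `lstar = 2 ln(C k*/k*)/ln(1-γ)`. -/
theorem stmt_1 (L A ρ Cin Cout γ R : ℝ)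
    (hL : 0 < L) (hA : 0 < A) (hρ : 0 < ρ) (hCin : 0 < Cin) (hCout : 0 < Cout)
    (hγ0 : 0 < γ) (hγ1 : γ < 1) (hR : 0 < R)
    (hthresh : ρ < 6 * Real.sqrt (2 * L * A * (1 - γ)) * R)
    (C : ℕ → ℝ)
    (hC : ∀ k : ℕ, C k = Real.sqrt L / (3 * Real.sqrt (2 * A)) *
      (Real.sqrt (2 * k * ρ / L) - R))
    (feasible : ℕ → (ℕ → ℝ) → Prop)
    (hfeas : ∀ (k : ℕ) (l : ℕ → ℝ), feasible k l ↔
      1 ≤ k ∧ (∀ i ∈ Finset.Icc 1 k, (1 : ℝ) ≤ l i) ∧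
        L / (2 * k) *
          (R + 3 * ∑ i ∈ Finset.Icc 1 k,
            Real.sqrt (2 * A * (1 - γ) ^ (l i) / L)) ^ 2 ≤ ρ)
    (φ : ℕ → ℝ)
    (hφ : ∀ k : ℕ, φ k = 2 * k * Cin / Real.log (1 - γ) * Real.log (C k / k) + k * Cout)
    (kstar : ℕ) (hk1 : 1 ≤ kstar) (hCpos : 0 < C kstar)
    (hmin : ∀ k : ℕ, 1 ≤ k → 0 < C k → φ kstar ≤ φ k)
    (lstar : ℝ) (hlstar : lstar = 2 * Real.log (C kstar / kstar) / Real.log (1 - γ)) :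
    feasible kstar (fun _ => lstar) ∧
      ∀ (k : ℕ) (l : ℕ → ℝ), feasible k l →
        Cin * (∑ _i ∈ Finset.Icc 1 kstar, lstar) + kstar * Cout ≤
          Cin * (∑ i ∈ Finset.Icc 1 k, l i) + k * Cout :=
  stmt_1_general L A ρ Cin Cout γ R hL hA hCin hγ0 hγ1 hR hthresh C hC feasible hfeas φ hφ kstar hk1
    hCpos hmin lstar hlstar
end

section
/- Let k ≥ 1 be an integer, γ ∈ (0,1) a real, and D a real with 0 < D < k(k+1)·√(1−γ)/2. Let n be the unique integer in {1,…,k} with (n−1)(2k+2−n)·√(1−γ) ≤ 2D < n(2k+1−n)·√(1−γ). Define l*_i = 1 for 1 ≤ i ≤ n−1 and l*_i = ln( i·(k+1−n) / (D − n(n−1)·√(1−γ)/2) ) / ln(1/√(1−γ)) for n ≤ i ≤ k. Then every l*_i ≥ 1, Σ_{i=1}^k i·(1−γ)^(l*_i/2) = D, and for every vector l = (l_1,…,l_k) with each l_i ∈ [1,∞) and Σ_{i=1}^k i·(1−γ)^(l_i/2) ≤ D, one has Σ_{i=1}^k l_i ≥ Σ_{i=1}^k l*_i. -/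
open Real Finset

/-!
Write `q = √(1 - γ)` and `c = -log q > 0`. Since `x ↦ q ^ x` is convex, its tangent
inequality `q ^ a - q ^ b ≤ c q ^ a (b - a)` makes the KKT conditions sufficient for
optimality. Let `E = D - n(n-1)q/2` be the budget left once the first `n - 1` coordinates
are set to `1`, and take the multiplier `μ = (k + 1 - n) / (c E)`. On the tail
`q ^ l*ᵢ = E / (i (k + 1 - n))`, so `μ i c q ^ l*ᵢ = 1`, and the choice of `n`, which reads
`(n - 1)(k + 1 - n) q ≤ E < n (k + 1 - n) q`, gives both `l*ᵢ ≥ 1` on the tail and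
`μ i c q ≤ 1` on the head, where the bound `lᵢ ≥ 1` is the active constraint.
-/

theorem rpow_sub_rpow_le_neg_log_mul {q : ℝ} (hq : 0 < q) (a b : ℝ) :
    q ^ a - q ^ b ≤ -log q * q ^ a * (b - a) := by
  have hb : q ^ b = q ^ a * exp (log q * (b - a)) := by
    rw [← rpow_def_of_pos hq, ← rpow_add hq, add_sub_cancel]
  calc q ^ a - q ^ b ≤ q ^ a - q ^ a * (log q * (b - a) + 1) := by
        rw [hb]; gcongr; exact add_one_le_exp _
    _ = -log q * q ^ a * (b - a) := by ring

theorem mul_rpow_sub_rpow_le_sub {q μ a b : ℝ} (hq : 0 < q) (hμ : 0 ≤ μ)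
    (h : μ * (-log q * q ^ a) = 1 ∨ (μ * (-log q * q ^ a) ≤ 1 ∧ a ≤ b)) :
    μ * (q ^ a - q ^ b) ≤ b - a := by
  have htangent : μ * (q ^ a - q ^ b) ≤ μ * (-log q * q ^ a) * (b - a) := by
    rw [mul_assoc]
    exact mul_le_mul_of_nonneg_left (rpow_sub_rpow_le_neg_log_mul hq a b) hμ
  rcases h with h | ⟨h, hab⟩
  · rwa [h, one_mul] at htangent
  · nlinarith

/-- KKT sufficiency for minimising `∑ bᵢ` subject to `∑ wᵢ q ^ bᵢ ≤ D`, with multiplier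
`μ`; where stationarity fails, `aᵢ` sits at a lower bound that `bᵢ` also respects. -/
theorem sum_le_sum_of_kkt {ι : Type*} {s : Finset ι} {w a b : ι → ℝ} {q μ D : ℝ}
    (hq : 0 < q) (hμ : 0 ≤ μ) (hw : ∀ i ∈ s, 0 ≤ w i)
    (ha : ∑ i ∈ s, w i * q ^ a i = D) (hb : ∑ i ∈ s, w i * q ^ b i ≤ D)
    (hkkt : ∀ i ∈ s, μ * w i * (-log q * q ^ a i) = 1 ∨
      (μ * w i * (-log q * q ^ a i) ≤ 1 ∧ a i ≤ b i)) :
    ∑ i ∈ s, a i ≤ ∑ i ∈ s, b i := by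
  have hterm : ∀ i ∈ s, μ * w i * (q ^ a i - q ^ b i) ≤ b i - a i := fun i hi =>
    mul_rpow_sub_rpow_le_sub hq (mul_nonneg hμ (hw i hi)) (hkkt i hi)
  have hlagrange : ∑ i ∈ s, μ * w i * (q ^ a i - q ^ b i)
      = μ * (D - ∑ i ∈ s, w i * q ^ b i) := by
    rw [← ha, ← sum_sub_distrib, mul_sum]
    exact sum_congr rfl fun i _ => by ring
  have hsum := sum_le_sum hterm
  rw [hlagrange, sum_sub_distrib] at hsum
  nlinarith [mul_nonneg hμ (sub_nonneg.2 hb)]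

theorem rpow_log_div_log_one_div {q x : ℝ} (hq : 0 < q) (hq1 : q ≠ 1) (hx : 0 < x) :
    q ^ (log x / log (1 / q)) = x⁻¹ := by
  have hlog : log q ≠ 0 := log_ne_zero_of_pos_of_ne_one hq hq1
  rw [rpow_def_of_pos hq, one_div, log_inv, ← exp_log (inv_pos.2 hx), log_inv]
  congr 1
  field_simp

theorem sum_Ico_one_natCast (n : ℕ) : ∑ i ∈ Ico 1 n, (i : ℝ) = n * (n - 1) / 2 := by
  induction n with
  | zero => simp
  | succ n ih =>
    rcases n.eq_zero_or_pos with rfl | hn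
    · simp
    · rw [sum_Ico_succ_top hn, ih]
      push_cast
      ring

section HeadTail

variable {q E : ℝ} {k n : ℕ} {a : ℕ → ℝ}

theorem one_le_of_head_tail (hq0 : 0 < q) (hq1 : q < 1) (hM : 0 < (k : ℝ) + 1 - n)
    (hhigh : E < n * (k + 1 - n) * q) (hhead : ∀ i, 1 ≤ i → i < n → a i = 1)
    (htail : ∀ i, n ≤ i → i ≤ k → q ^ a i = E / (i * (k + 1 - n))) :
    ∀ i ∈ Icc 1 k, 1 ≤ a i := by
  intro i hi
  rw [mem_Icc] at hi
  rcases lt_or_ge i n with hin | hni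
  · exact (hhead i hi.1 hin).ge
  · have hni' : (n : ℝ) ≤ i := by exact_mod_cast hni
    have hi0 : (0 : ℝ) < i := by exact_mod_cast hi.1
    rw [← rpow_le_rpow_left_iff_of_base_lt_one hq0 hq1, rpow_one, htail i hni hi.2,
      div_le_iff₀ (by positivity)]
    nlinarith [mul_nonneg (mul_nonneg (sub_nonneg.2 hni') hM.le) hq0.le]

theorem sum_mul_rpow_of_head_tail (hn1 : 1 ≤ n) (hnk : n ≤ k)
    (hhead : ∀ i, 1 ≤ i → i < n → a i = 1)
    (htail : ∀ i, n ≤ i → i ≤ k → q ^ a i = E / (i * (k + 1 - n))) :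
    ∑ i ∈ Icc 1 k, (i : ℝ) * q ^ a i = n * (n - 1) * q / 2 + E := by
  have hM : (k : ℝ) + 1 - n ≠ 0 := by
    have : (n : ℝ) ≤ k := by exact_mod_cast hnk
    linarith
  have head : ∑ i ∈ Ico 1 n, (i : ℝ) * q ^ a i = ∑ i ∈ Ico 1 n, (i : ℝ) * q :=
    sum_congr rfl fun i hi => by
      rw [mem_Ico] at hi
      rw [hhead i hi.1 hi.2, rpow_one]
  have tail : ∑ i ∈ Icc n k, (i : ℝ) * q ^ a i = ∑ _i ∈ Icc n k, E / (k + 1 - n) :=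
    sum_congr rfl fun i hi => by
      rw [mem_Icc] at hi
      have hi0 : (i : ℝ) ≠ 0 := by
        have : 1 ≤ i := hn1.trans hi.1
        positivity
      rw [htail i hi.1 hi.2]
      field_simp
  rw [← Ico_add_one_right_eq_Icc, ← sum_Ico_consecutive _ hn1 (by omega : n ≤ k + 1),
    Ico_add_one_right_eq_Icc, head, tail, ← sum_mul, sum_Ico_one_natCast, sum_const,
    Nat.card_Icc, nsmul_eq_mul, Nat.cast_sub (by omega : n ≤ k + 1)]
  push_cast
  field_simp

theorem kkt_of_head_tail (hq0 : 0 < q) (hq1 : q < 1) (hE : 0 < E) (hM : 0 < (k : ℝ) + 1 - n)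
    (hlow : (n - 1) * (k + 1 - n) * q ≤ E) (hhead : ∀ i, 1 ≤ i → i < n → a i = 1)
    (htail : ∀ i, n ≤ i → i ≤ k → q ^ a i = E / (i * (k + 1 - n)))
    {l : ℕ → ℝ} (hl : ∀ i ∈ Icc 1 k, 1 ≤ l i) :
    ∀ i ∈ Icc 1 k, (k + 1 - n) / (-log q * E) * i * (-log q * q ^ a i) = 1 ∨
      ((k + 1 - n) / (-log q * E) * i * (-log q * q ^ a i) ≤ 1 ∧ a i ≤ l i) := by
  intro i hi
  have hlog : log q ≠ 0 := (log_neg hq0 hq1).ne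
  obtain ⟨hi1, hik⟩ := mem_Icc.1 hi
  rcases lt_or_ge i n with hin | hni
  · right
    rw [hhead i hi1 hin, rpow_one]
    refine ⟨?_, hl i hi⟩
    have hin' : (i : ℝ) + 1 ≤ n := by exact_mod_cast hin
    rw [show (k + 1 - n) / (-log q * E) * i * (-log q * q) = (k + 1 - n) * i * q / E by
      field_simp, div_le_one hE]
    nlinarith [mul_le_mul_of_nonneg_right (mul_le_mul_of_nonneg_left
      (le_sub_iff_add_le.2 hin') hM.le) hq0.le]
  · left
    have hi0 : (i : ℝ) ≠ 0 := by positivity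
    rw [htail i hni hik]
    field_simp

end HeadTail

theorem stmt_7_general (k : ℕ) (γ D : ℝ) (hγ0 : 0 < γ) (hγ1 : γ < 1)
    (hD0 : 0 < D)
    (n : ℕ) (hn1 : 1 ≤ n) (hnk : n ≤ k)
    (hnlow : ((n : ℝ) - 1) * (2 * (k : ℝ) + 2 - n) * Real.sqrt (1 - γ) ≤ 2 * D)
    (hnhigh : 2 * D < (n : ℝ) * (2 * (k : ℝ) + 1 - n) * Real.sqrt (1 - γ))
    (lstar : ℕ → ℝ)
    (hlstar1 : ∀ i : ℕ, 1 ≤ i → i < n → lstar i = 1)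
    (hlstar2 : ∀ i : ℕ, n ≤ i → i ≤ k → lstar i =
      Real.log ((i : ℝ) * ((k : ℝ) + 1 - n) /
          (D - (n : ℝ) * ((n : ℝ) - 1) * Real.sqrt (1 - γ) / 2)) /
        Real.log (1 / Real.sqrt (1 - γ))) :
    (∀ i ∈ Finset.Icc 1 k, (1 : ℝ) ≤ lstar i) ∧
      (∑ i ∈ Finset.Icc 1 k, (i : ℝ) * (1 - γ) ^ (lstar i / 2)) = D ∧
      ∀ l : ℕ → ℝ, (∀ i ∈ Finset.Icc 1 k, (1 : ℝ) ≤ l i) →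
        (∑ i ∈ Finset.Icc 1 k, (i : ℝ) * (1 - γ) ^ (l i / 2)) ≤ D →
        (∑ i ∈ Finset.Icc 1 k, lstar i) ≤ ∑ i ∈ Finset.Icc 1 k, l i := by
  have h1γ : 0 < 1 - γ := sub_pos.2 hγ1
  have hq0 : 0 < √(1 - γ) := sqrt_pos.2 h1γ
  have hq1 : √(1 - γ) < 1 := (sqrt_lt' one_pos).2 (by linarith)
  simp only [rpow_div_two_eq_sqrt _ h1γ.le]
  set q := √(1 - γ)
  set E := D - n * (n - 1) * q / 2 with hE_def
  have hM : (0 : ℝ) < k + 1 - n := by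
    have : (n : ℝ) ≤ k := by exact_mod_cast hnk
    linarith
  have hlow : (n - 1) * (k + 1 - n) * q ≤ E := by linear_combination hnlow / 2
  have hhigh : E < n * (k + 1 - n) * q := by linear_combination hnhigh / 2
  have hE : 0 < E := by
    rcases hn1.eq_or_lt with rfl | hn
    · simpa [hE_def] using hD0
    · have : (1 : ℝ) < n := by exact_mod_cast hn
      exact lt_of_lt_of_le (mul_pos (mul_pos (by linarith) hM) hq0) hlow
  have htail : ∀ i, n ≤ i → i ≤ k → q ^ lstar i = E / (i * (k + 1 - n)) := by
    intro i hni hik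
    have hi0 : (0 : ℝ) < i := by exact_mod_cast hn1.trans hni
    rw [hlstar2 i hni hik, rpow_log_div_log_one_div hq0 hq1.ne (by positivity), inv_div]
  have hsum : ∑ i ∈ Icc 1 k, (i : ℝ) * q ^ lstar i = D := by
    rw [sum_mul_rpow_of_head_tail hn1 hnk hlstar1 htail, hE_def]
    ring
  refine ⟨one_le_of_head_tail hq0 hq1 hM hhigh hlstar1 htail, hsum, fun l hl hlD => ?_⟩
  have hc : 0 < -log q := neg_pos.2 (log_neg hq0 hq1)
  exact sum_le_sum_of_kkt hq0 (div_nonneg hM.le (mul_pos hc hE).le)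
    (fun i _ => i.cast_nonneg) hsum hlD
    (kkt_of_head_tail hq0 hq1 hE hM hlow hlstar1 htail hl)

/-- Inner optimisation step of Proposition 5: with weighted constraint
`∑ i·(1-γ)^(lᵢ/2) ≤ D`, the total `∑ lᵢ` is minimized by a vector whose entries
equal 1 up to index `n-1` and then increase with the index. -/
theorem stmt_7 (k : ℕ) (hk : 1 ≤ k) (γ D : ℝ) (hγ0 : 0 < γ) (hγ1 : γ < 1)
    (hD0 : 0 < D) (hDk : D < k * (k + 1) * Real.sqrt (1 - γ) / 2)
    (n : ℕ) (hn1 : 1 ≤ n) (hnk : n ≤ k)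
    (hnlow : ((n : ℝ) - 1) * (2 * (k : ℝ) + 2 - n) * Real.sqrt (1 - γ) ≤ 2 * D)
    (hnhigh : 2 * D < (n : ℝ) * (2 * (k : ℝ) + 1 - n) * Real.sqrt (1 - γ))
    (lstar : ℕ → ℝ)
    (hlstar1 : ∀ i : ℕ, 1 ≤ i → i < n → lstar i = 1)
    (hlstar2 : ∀ i : ℕ, n ≤ i → i ≤ k → lstar i =
      Real.log ((i : ℝ) * ((k : ℝ) + 1 - n) /
          (D - (n : ℝ) * ((n : ℝ) - 1) * Real.sqrt (1 - γ) / 2)) /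
        Real.log (1 / Real.sqrt (1 - γ))) :
    (∀ i ∈ Finset.Icc 1 k, (1 : ℝ) ≤ lstar i) ∧
      (∑ i ∈ Finset.Icc 1 k, (i : ℝ) * (1 - γ) ^ (lstar i / 2)) = D ∧
      ∀ l : ℕ → ℝ, (∀ i ∈ Finset.Icc 1 k, (1 : ℝ) ≤ l i) →
        (∑ i ∈ Finset.Icc 1 k, (i : ℝ) * (1 - γ) ^ (l i / 2)) ≤ D →
        (∑ i ∈ Finset.Icc 1 k, lstar i) ≤ ∑ i ∈ Finset.Icc 1 k, l i :=
  stmt_7_general k γ D hγ0 hγ1 hD0 n hn1 hnk hnlow hnhigh lstar hlstar1 hlstar2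
end

section
/- Let L, A > 0, γ ∈ (0,1) and R > 0 be reals with 3·√A < √(12·√(2·L·A·(1−γ))·R), and let ρ be a real with 0 < ρ < (√(12·√(2·L·A·(1−γ))·R) − 3·√A)². Then for every real k > 0, (√L/(3·√(2A)))·(√(ρ/(2L))·(k+1) − R) < k(k+1)·√(1−γ)/2. -/
open Real

/-!
Write `a = √A`, `r = √ρ`, `g = √(1-γ)`. The threshold on `ρ` says exactly that
`(r + 3a)² < 12 √(2LA(1-γ)) R`, i.e. that the subtracted term `√L R / (3√(2A))` of `D(k)`
exceeds `(r + 3a)² / (72 A g)`. After clearing denominators the claim becomes the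
polynomial inequality `12 a g r (k+1) ≤ 36 a² g² k (k+1) + (r + 3a)²`, which holds for every
real `k` because the difference is `(6agk + 3ag - r)² + (1 - g)(6ar + 9a²(1 + g))`.
-/

theorem sq_sqrt_add_lt_of_lt_sq_sub {ρ c X : ℝ} (hc : 0 ≤ c) (hcX : c < √X)
    (hρ : ρ < (√X - c) ^ 2) : (√ρ + c) ^ 2 < X := by
  have hr : √ρ < √X - c := (Real.sqrt_lt' (by linarith)).mpr hρ
  exact (Real.lt_sqrt (by positivity)).mp (by linarith)

theorem mul_mul_add_one_le_sq_add_sq {a r g : ℝ} (ha : 0 ≤ a) (hr : 0 ≤ r) (hg0 : 0 ≤ g)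
    (hg1 : g ≤ 1) (k : ℝ) :
    12 * a * g * r * (k + 1) ≤ 36 * a ^ 2 * g ^ 2 * k * (k + 1) + (r + 3 * a) ^ 2 := by
  have hrest : 0 ≤ (1 - g) * (6 * a * r + 9 * a ^ 2 * (1 + g)) := by
    apply mul_nonneg (by linarith); positivity
  nlinarith [sq_nonneg (6 * a * g * k + 3 * a * g - r)]

theorem stmt_17_general (L A γ R ρ : ℝ) (hL : 0 < L) (hA : 0 < A)
    (hγ0 : 0 < γ) (hγ1 : γ < 1)
    (hsq : 3 * Real.sqrt A < Real.sqrt (12 * Real.sqrt (2 * L * A * (1 - γ)) * R))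
    (hρ : ρ < (Real.sqrt (12 * Real.sqrt (2 * L * A * (1 - γ)) * R) -
      3 * Real.sqrt A) ^ 2) :
    ∀ k : ℝ, 0 < k →
      Real.sqrt L / (3 * Real.sqrt (2 * A)) *
          (Real.sqrt (ρ / (2 * L)) * (k + 1) - R) <
        k * (k + 1) * Real.sqrt (1 - γ) / 2 := by
  intro k _
  have ha : 0 < √A := Real.sqrt_pos.mpr hA
  have hl : 0 < √L := Real.sqrt_pos.mpr hL
  have hg : 0 < √(1 - γ) := Real.sqrt_pos.mpr (by linarith)
  have hg1 : √(1 - γ) ≤ 1 := Real.sqrt_le_one.mpr (by linarith)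
  have hs : √2 * √2 = 2 := Real.mul_self_sqrt zero_le_two
  have key := sq_sqrt_add_lt_of_lt_sq_sub (by positivity) hsq hρ
  rw [Real.sqrt_mul (by positivity), Real.sqrt_mul (by positivity),
    Real.sqrt_mul zero_le_two] at key
  have poly := mul_mul_add_one_le_sq_add_sq ha.le (Real.sqrt_nonneg ρ) hg.le hg1 k
  have hD : √L / (3 * √(2 * A)) * (√(ρ / (2 * L)) * (k + 1) - R) =
      (√ρ * (k + 1) - √2 * √L * R) / (6 * √A) := by
    rw [Real.sqrt_mul zero_le_two, Real.sqrt_div' _ (by positivity),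
      Real.sqrt_mul zero_le_two]
    field_simp
    linear_combination 3 * (√L * √2 * R - √ρ * (k + 1)) * hs
  rw [hD, div_lt_iff₀ (by positivity)]
  refine lt_of_mul_lt_mul_left ?_ (by positivity : (0 : ℝ) ≤ 12 * √A * √(1 - γ))
  nlinarith

/-- Case 1 of the proof of Proposition 5: below the accuracy threshold of
Proposition 5 one always has `D(k) < k(k+1)√(1-γ)/2`. -/
theorem stmt_17 (L A γ R ρ : ℝ) (hL : 0 < L) (hA : 0 < A)
    (hγ0 : 0 < γ) (hγ1 : γ < 1) (hR : 0 < R)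
    (hsq : 3 * Real.sqrt A < Real.sqrt (12 * Real.sqrt (2 * L * A * (1 - γ)) * R))
    (hρ0 : 0 < ρ)
    (hρ : ρ < (Real.sqrt (12 * Real.sqrt (2 * L * A * (1 - γ)) * R) -
      3 * Real.sqrt A) ^ 2) :
    ∀ k : ℝ, 0 < k →
      Real.sqrt L / (3 * Real.sqrt (2 * A)) *
          (Real.sqrt (ρ / (2 * L)) * (k + 1) - R) <
        k * (k + 1) * Real.sqrt (1 - γ) / 2 :=
  stmt_17_general L A γ R ρ hL hA hγ0 hγ1 hsq hρ
end

section
/- Let k ≥ 1 be an integer and γ ∈ (0,1) a real; set c = ln(1/√(1−γ)) > 0. For λ > 0 define M(λ) = ⌈ 1/(λ·√(1−γ)·c) ⌉ and F(λ) = M(λ)·(M(λ)−1)·√(1−γ)/2 + (k − M(λ) + 1)/(λ·c). Then: (a) for every integer n with 1 ≤ n ≤ k, F(1/(n·√(1−γ)·c)) = n·(2k+1−n)·√(1−γ)/2; (b) F is continuous and strictly decreasing on the interval [1/(k·√(1−γ)·c), ∞), with F(1/(k·√(1−γ)·c)) = k(k+1)·√(1−γ)/2 and F(λ) → 0 as λ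 → ∞; and (c) for every real D with 0 < D < k(k+1)·√(1−γ)/2 there exists a unique λ ≥ 1/(k·√(1−γ)·c) with F(λ) = D. -/
open Real Filter Finset

/-!
Write `s = √(1 - γ)` and `x = 1 / (λ c)`. Then `M(λ) = ⌈x / s⌉` counts the indices `i` with
`i s < x`, so as long as `M(λ) ≤ k`, i.e. `λ ≥ 1 / (k s c)`, splitting `∑_{i<k} min (i s) x` at
`M(λ)` shows `F(λ) = x + ∑_{i<k} min (i s) x`. This is a continuous, strictly increasing
function of `x` vanishing at `x = 0`, while `x` decreases continuously to `0` as `λ → ∞`;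
(c) is then the intermediate value theorem.
-/

lemma sum_range_natCast (m : ℕ) : ∑ i ∈ range m, (i : ℝ) = m * (m - 1) / 2 := by
  induction m with
  | zero => simp
  | succ m ih => rw [sum_range_succ, ih]; push_cast; ring

lemma sum_range_min_natCast (t : ℝ) {k : ℕ} (hk : ⌈t⌉₊ ≤ k) :
    ∑ i ∈ range k, min (i : ℝ) t = ⌈t⌉₊ * (⌈t⌉₊ - 1) / 2 + (k - ⌈t⌉₊) * t := by
  have below : ∑ i ∈ range ⌈t⌉₊, min (i : ℝ) t = ∑ i ∈ range ⌈t⌉₊, (i : ℝ) :=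
    sum_congr rfl fun i hi => min_eq_left (Nat.lt_ceil.mp (mem_range.mp hi)).le
  have above : ∑ i ∈ Ico ⌈t⌉₊ k, min (i : ℝ) t = ∑ i ∈ Ico ⌈t⌉₊ k, t :=
    sum_congr rfl fun i hi => min_eq_right (Nat.ceil_le.mp (mem_Ico.mp hi).1)
  rw [← sum_range_add_sum_Ico _ hk, below, above, sum_range_natCast, sum_const, Nat.card_Ico,
    nsmul_eq_mul, Nat.cast_sub hk]

theorem StrictAntiOn.existsUnique_eq_of_tendsto_atTop {α δ : Type*}
    [ConditionallyCompleteLinearOrder α] [DenselyOrdered α] [TopologicalSpace α] [OrderTopology α]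
    [Nonempty α] [LinearOrder δ] [TopologicalSpace δ] [OrderTopology δ]
    {f : α → δ} {a : α} {L D : δ} (hcont : ContinuousOn f (Set.Ici a))
    (hanti : StrictAntiOn f (Set.Ici a)) (hlim : Tendsto f atTop (nhds L)) (hL : L < D)
    (hD : D < f a) : ∃! x, a ≤ x ∧ f x = D := by
  obtain ⟨b, hfb, hab⟩ := ((hlim.eventually_lt_const hL).and (eventually_ge_atTop a)).exists
  obtain ⟨x, hx, hfx⟩ := intermediate_value_Icc' hab (hcont.mono Set.Icc_subset_Ici_self)
    ⟨hfb.le, hD.le⟩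
  exact ⟨x, ⟨hx.1, hfx⟩, fun y hy => hanti.injOn hy.1 hx.1 (hy.2.trans hfx.symm)⟩

noncomputable def clippedSum (k : ℕ) (s x : ℝ) : ℝ := x + ∑ i ∈ range k, min (i * s) x

section clippedSum

variable (k : ℕ) {s : ℝ}

lemma clippedSum_eq (hs : 0 < s) (x : ℝ) (hk : ⌈x / s⌉₊ ≤ k) :
    clippedSum k s x = ⌈x / s⌉₊ * (⌈x / s⌉₊ - 1) * s / 2 + (k - ⌈x / s⌉₊ + 1) * x := by
  have hmin (i : ℕ) : min ((i : ℝ) * s) x = min (i : ℝ) (x / s) * s := by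
    rw [min_mul_of_nonneg _ _ hs.le, div_mul_cancel₀ x hs.ne']
  simp only [clippedSum, hmin, ← sum_mul, sum_range_min_natCast _ hk]
  field_simp
  ring

lemma continuous_clippedSum (s : ℝ) : Continuous (clippedSum k s) := by
  unfold clippedSum
  fun_prop

lemma strictMono_clippedSum (s : ℝ) : StrictMono (clippedSum k s) := fun _ _ hxy =>
  add_lt_add_of_lt_of_le hxy (sum_le_sum fun _ _ => min_le_min le_rfl hxy.le)

lemma clippedSum_zero (hs : 0 ≤ s) : clippedSum k s 0 = 0 := by
  simp only [clippedSum, zero_add]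
  exact sum_eq_zero fun i _ => min_eq_right (by positivity)

end clippedSum

noncomputable def activeCount (s c lam : ℝ) : ℕ := ⌈1 / (lam * s * c)⌉₊

noncomputable def activeAggregate (k : ℕ) (s c lam : ℝ) : ℝ :=
  (activeCount s c lam : ℝ) * ((activeCount s c lam : ℝ) - 1) * s / 2 +
    ((k : ℝ) - activeCount s c lam + 1) / (lam * c)

section activeAggregate

variable {k : ℕ} {s c : ℝ}

lemma activeAggregate_one_div_natCast (hs : s ≠ 0) (hc : c ≠ 0) {n : ℕ} (hn : n ≠ 0) :
    activeAggregate k s c (1 / (n * s * c)) = n * (2 * k + 1 - n) * s / 2 := by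
  have hcount : activeCount s c (1 / (n * s * c)) = n := by
    have hx : 1 / (1 / (n * s * c) * s * c) = n := by field_simp
    rw [activeCount, hx, Nat.ceil_natCast]
  rw [activeAggregate, hcount]
  field_simp
  ring

lemma activeAggregate_eqOn_clippedSum (hk : k ≠ 0) (hs : 0 < s) (hc : 0 < c) :
    Set.EqOn (activeAggregate k s c) (fun lam => clippedSum k s (1 / (lam * c)))
      (Set.Ici (1 / (k * s * c))) := by
  intro lam hlam
  dsimp only
  have hlam0 : 0 < lam := lt_of_lt_of_le (by positivity) hlam
  have hx : 1 / (lam * c) / s = 1 / (lam * s * c) := by field_simp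
  have hcount : activeCount s c lam ≤ k := by
    refine Nat.ceil_le.mpr ?_
    rw [Set.mem_Ici, div_le_iff₀ (by positivity)] at hlam
    rw [div_le_iff₀ (by positivity)]
    linarith
  rw [activeAggregate, clippedSum_eq k hs _ (hx ▸ hcount), hx, ← activeCount]
  field_simp

variable (k) in
lemma strictAntiOn_clippedSum_one_div (hc : 0 < c) :
    StrictAntiOn (fun lam => clippedSum k s (1 / (lam * c))) (Set.Ioi 0) :=
  (strictMono_clippedSum k s).comp_strictAntiOn fun _ ha _ _ hab =>
    one_div_lt_one_div_of_lt (mul_pos ha hc) (mul_lt_mul_of_pos_right hab hc)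

lemma continuousOn_activeAggregate (hk : k ≠ 0) (hs : 0 < s) (hc : 0 < c) :
    ContinuousOn (activeAggregate k s c) (Set.Ici (1 / (k * s * c))) := by
  refine ContinuousOn.congr ?_ (activeAggregate_eqOn_clippedSum hk hs hc)
  refine (continuous_clippedSum k s).comp_continuousOn
    (continuousOn_const.div (by fun_prop) fun lam hlam => ?_)
  have : 0 < lam := lt_of_lt_of_le (by positivity) hlam
  positivity

lemma strictAntiOn_activeAggregate (hk : k ≠ 0) (hs : 0 < s) (hc : 0 < c) :
    StrictAntiOn (activeAggregate k s c) (Set.Ici (1 / (k * s * c))) :=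
  ((strictAntiOn_clippedSum_one_div k hc).mono (Set.Ici_subset_Ioi.mpr (by positivity))).congr
    (activeAggregate_eqOn_clippedSum hk hs hc).symm

lemma tendsto_activeAggregate_atTop (hk : k ≠ 0) (hs : 0 < s) (hc : 0 < c) :
    Tendsto (activeAggregate k s c) atTop (nhds 0) := by
  have hinv : Tendsto (fun lam => 1 / (lam * c)) atTop (nhds 0) :=
    tendsto_const_nhds.div_atTop (tendsto_id.atTop_mul_const hc)
  have := ((continuous_clippedSum k s).tendsto 0).comp hinv
  rw [clippedSum_zero k hs.le] at this
  exact this.congr' (EventuallyEq.symm <| (eventually_ge_atTop _).mono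
    (activeAggregate_eqOn_clippedSum hk hs hc))

end activeAggregate

/-- Determination of the Lagrange multiplier in the proof of Proposition 5:
properties of the function `F` aggregating the active-constraint values, where
`M(λ)` counts the indices at which the box constraint `lᵢ ≥ 1` is active. -/
theorem stmt_18 (k : ℕ) (hk : 1 ≤ k) (γ : ℝ) (hγ0 : 0 < γ) (hγ1 : γ < 1)
    (c : ℝ) (hc : c = Real.log (1 / Real.sqrt (1 - γ)))
    (M : ℝ → ℕ) (hM : ∀ lam : ℝ, 0 < lam →
      M lam = ⌈1 / (lam * Real.sqrt (1 - γ) * c)⌉₊)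
    (F : ℝ → ℝ) (hF : ∀ lam : ℝ, 0 < lam →
      F lam = (M lam : ℝ) * ((M lam : ℝ) - 1) * Real.sqrt (1 - γ) / 2 +
        ((k : ℝ) - M lam + 1) / (lam * c)) :
    0 < c ∧
    -- (a)
    (∀ n : ℕ, 1 ≤ n → n ≤ k →
      F (1 / (n * Real.sqrt (1 - γ) * c)) =
        (n : ℝ) * (2 * (k : ℝ) + 1 - n) * Real.sqrt (1 - γ) / 2) ∧
    -- (b)
    ContinuousOn F (Set.Ici (1 / ((k : ℝ) * Real.sqrt (1 - γ) * c))) ∧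
    StrictAntiOn F (Set.Ici (1 / ((k : ℝ) * Real.sqrt (1 - γ) * c))) ∧
    F (1 / ((k : ℝ) * Real.sqrt (1 - γ) * c)) =
      (k : ℝ) * ((k : ℝ) + 1) * Real.sqrt (1 - γ) / 2 ∧
    Tendsto F atTop (nhds 0) ∧
    -- (c)
    (∀ D : ℝ, 0 < D → D < (k : ℝ) * ((k : ℝ) + 1) * Real.sqrt (1 - γ) / 2 →
      ∃! lam : ℝ, 1 / ((k : ℝ) * Real.sqrt (1 - γ) * c) ≤ lam ∧ F lam = D) := by
  have hk0 : k ≠ 0 := Nat.one_le_iff_ne_zero.mp hk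
  have hs : 0 < √(1 - γ) := Real.sqrt_pos.mpr (by linarith)
  have hc0 : 0 < c :=
    hc ▸ Real.log_pos (one_lt_one_div hs ((Real.sqrt_lt' one_pos).mpr (by linarith)))
  have hFeq : Set.EqOn F (activeAggregate k √(1 - γ) c) (Set.Ioi 0) := fun lam hlam => by
    rw [hF lam hlam, hM lam hlam]
    rfl
  have hFeqOn : Set.EqOn F (activeAggregate k √(1 - γ) c) (Set.Ici (1 / (k * √(1 - γ) * c))) :=
    hFeq.mono (Set.Ici_subset_Ioi.mpr (by positivity))
  have hvalue (n : ℕ) (hn : 1 ≤ n) :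
      F (1 / (n * √(1 - γ) * c)) = n * (2 * k + 1 - n) * √(1 - γ) / 2 := by
    rw [hFeq (Set.mem_Ioi.mpr (by positivity)),
      activeAggregate_one_div_natCast hs.ne' hc0.ne' (by omega)]
  have hcont := (continuousOn_activeAggregate hk0 hs hc0).congr hFeqOn
  have hanti := (strictAntiOn_activeAggregate hk0 hs hc0).congr hFeqOn.symm
  have hlim := (tendsto_activeAggregate_atTop hk0 hs hc0).congr'
    (EventuallyEq.symm <| eventually_gt_atTop 0 |>.mono hFeq)
  refine ⟨hc0, fun n hn _ => hvalue n hn, hcont, hanti, by rw [hvalue k hk]; ring, hlim,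
    fun D hD0 hDk => hanti.existsUnique_eq_of_tendsto_atTop hcont hlim hD0 ?_⟩
  rw [hvalue k hk]
  linarith
end
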